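/- Let g ∈ ℝⁿ \ {0}, let H be a symmetric n×n real matrix, and let ρ: ℝ → [0,∞] be a proper closed convex function with ρ(0) = 0 satisfying Assumptions 1 and 2. Define k̂(t) := inf_{γ ≥ 0} { ρ(γ − 1) + γ λ_min(B(t)) }, where B(t) is the (n+1)×(n+1) symmetric matrix with top-left entry t, first row/column completed by g, and bottom-right block H. Then the RW-dual value v_{RWd} := sup_{t ∈ ℝ} { k̂(t) − t } equals v_{ρr} := inf_x { 2gᵀx + xᵀHx + ρ(‖x‖²) }, and the supremum defining v_{RWd} is attained. -/

import Mathlib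

open Matrix Filter Set Topology

set_option linter.unusedSectionVars false

noncomputable section

/-- The quadratic part `2 gᵀ x + xᵀ H x` of the objective. -/
def quadObj {n : ℕ} (g : Fin n → ℝ) (H : Matrix (Fin n) (Fin n) ℝ) (x : Fin n → ℝ) : ℝ :=
  2 * (g ⬝ᵥ x) + x ⬝ᵥ H.mulVec x

/-- The squared Euclidean norm `‖x‖²`. -/
def nsq {m : Type*} [Fintype m] (x : m → ℝ) : ℝ := x ⬝ᵥ x

/-- The Euclidean norm `‖x‖`. -/
def vnorm {m : Type*} [Fintype m] (x : m → ℝ) : ℝ := Real.sqrt (x ⬝ᵥ x)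

/-- `ρ : ℝ → [0,∞]` is proper closed (lsc) convex with `ρ 0 = 0`. -/
def RhoBasic (ρ : ℝ → EReal) : Prop :=
  (∀ t, 0 ≤ ρ t) ∧ ρ 0 = 0 ∧ LowerSemicontinuous ρ ∧
    ∀ a b θ : ℝ, 0 ≤ θ → θ ≤ 1 →
      ρ (θ * a + (1 - θ) * b) ≤ (θ : EReal) * ρ a + ((1 - θ : ℝ) : EReal) * ρ b

/-- Assumption 1: `ρ` is nondecreasing, vanishes on `(-∞,0]`, finite somewhere on `(0,∞)`. -/
def Assump1 (ρ : ℝ → EReal) : Prop :=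
  Monotone ρ ∧ (∀ t ≤ (0:ℝ), ρ t = 0) ∧ ∃ t₀ : ℝ, 0 < t₀ ∧ ρ t₀ < ⊤

/-- Assumption 2: supercoercivity, `lim_{t→∞} ρ(t)/t = ∞`. -/
def Assump2 (ρ : ℝ → EReal) : Prop :=
  ∀ M : ℝ, ∀ᶠ t : ℝ in atTop, ((M * t : ℝ) : EReal) ≤ ρ t

/-- The monotone conjugate `ρ⁺(u) = sup_{t ≥ 0} (ut − ρ(t))`. -/
def mconj (ρ : ℝ → EReal) (u : ℝ) : EReal :=
  ⨆ t : {t : ℝ // 0 ≤ t}, (((u * (t : ℝ) : ℝ) : EReal) - ρ t)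

/-- The real-valued monotone conjugate (under supercoercivity `ρ⁺` is finite). -/
def mconjR (ρ : ℝ → EReal) (u : ℝ) : ℝ := (mconj ρ u).toReal

/-- Assumption 3: `ρ⁺` is differentiable on `(0,∞)`. -/
def Assump3 (ρ : ℝ → EReal) : Prop :=
  ∀ u : ℝ, 0 < u → DifferentiableAt ℝ (mconjR ρ) u

/-- Convex subdifferential of an `EReal`-valued function on `ℝ`. -/
def subdiff (f : ℝ → EReal) (x : ℝ) : Set ℝ :=
  {s : ℝ | ∀ y : ℝ, f x + ((s * (y - x) : ℝ) : EReal) ≤ f y}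

/-- Indicator function `δ_{ℝ₊}` of `[0,∞)`. -/
def indNonneg : ℝ → EReal := fun t => if 0 ≤ t then (0 : EReal) else ⊤

/-- Smallest eigenvalue of a symmetric matrix, via the Rayleigh quotient. -/
def lambdaMin {m : Type*} [Fintype m] (A : Matrix m m ℝ) : ℝ :=
  ⨅ x : {x : m → ℝ // x ⬝ᵥ x = 1}, ((x : m → ℝ) ⬝ᵥ A.mulVec (x : m → ℝ))

/-- Euclidean operator norm of a matrix. -/
def opNorm {m : Type*} [Fintype m] (A : Matrix m m ℝ) : ℝ :=
  ⨆ x : {x : m → ℝ // x ⬝ᵥ x = 1}, vnorm (A.mulVec (x : m → ℝ))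

/-- The bordered matrix `B(t) = [[t, gᵀ],[g, H]]`. -/
def Bmat {n : ℕ} (g : Fin n → ℝ) (H : Matrix (Fin n) (Fin n) ℝ) (t : ℝ) :
    Matrix (Fin (n+1)) (Fin (n+1)) ℝ :=
  Matrix.of (Fin.cons (Fin.cons t g) (fun i => Fin.cons (g i) (H i)))

/-- Moore–Penrose pseudoinverse of a real symmetric matrix (via the spectral theorem). -/
def symPinv {n : ℕ} (A : Matrix (Fin n) (Fin n) ℝ) : Matrix (Fin n) (Fin n) ℝ :=
  if h : A.IsHermitian then
    (h.eigenvectorUnitary : Matrix (Fin n) (Fin n) ℝ) *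
      Matrix.diagonal (fun i => (h.eigenvalues i)⁻¹) *
      star (h.eigenvectorUnitary : Matrix (Fin n) (Fin n) ℝ)
  else 0

/-- The set of minimizers of `ρ`. -/
def argminSet (ρ : ℝ → EReal) : Set ℝ := {t : ℝ | ∀ s : ℝ, ρ t ≤ ρ s}

/-- The RW-dual function `k̂(t) = inf_{γ ≥ 0} { ρ(γ−1) + γ λ_min(B(t)) }`. -/
def khat {n : ℕ} (ρ : ℝ → EReal) (g : Fin n → ℝ) (H : Matrix (Fin n) (Fin n) ℝ) (t : ℝ) : EReal :=
  ⨅ γ : {γ : ℝ // 0 ≤ γ},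
    (ρ ((γ : ℝ) - 1) + ((((γ : ℝ) * lambdaMin (Bmat g H t)) : ℝ) : EReal))


section Ray

variable {m : Type*} [Fintype m] (A : Matrix m m ℝ)

theorem nsq_nonneg (x : m → ℝ) : 0 ≤ nsq x :=
  Finset.sum_nonneg fun i _ => mul_self_nonneg (x i)

theorem nsq_eq_zero {x : m → ℝ} : nsq x = 0 ↔ x = 0 := dotProduct_self_eq_zero

theorem nsq_smul (c : ℝ) (x : m → ℝ) : nsq (c • x) = c^2 * nsq x := by
  simp [nsq, smul_dotProduct, dotProduct_smul, smul_eq_mul]; ring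

variable [DecidableEq m] [Nonempty m]

theorem sphere_nonempty : ∃ u : m → ℝ, nsq u = 1 := by
  classical
  obtain ⟨i⟩ := ‹Nonempty m›
  refine ⟨Pi.single i 1, ?_⟩
  simp [nsq, dotProduct_single]

theorem continuous_dot (f h : (m → ℝ) → (m → ℝ)) (hf : Continuous f) (hh : Continuous h) :
    Continuous fun x => f x ⬝ᵥ h x := by
  unfold dotProduct
  exact continuous_finset_sum _ fun i _ =>
    ((continuous_apply i).comp hf).mul ((continuous_apply i).comp hh)

theorem continuous_qf : Continuous fun x : m → ℝ => x ⬝ᵥ A.mulVec x := by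
  apply continuous_dot _ _ continuous_id
  unfold Matrix.mulVec
  exact continuous_pi fun i => continuous_dot _ _ continuous_const continuous_id

theorem isCompact_sphere' : IsCompact {x : m → ℝ | nsq x = 1} := by
  have hsub : {x : m → ℝ | nsq x = 1} ⊆ Set.Icc (fun _ => (-1 : ℝ)) (fun _ => 1) := by
    intro x hx
    have hx' : nsq x = 1 := hx
    constructor <;> intro i
    · by_contra h
      push_neg at h
      have h1 : (1:ℝ) < x i * x i := by nlinarith
      have h2 : x i * x i ≤ nsq x := by
        unfold nsq dotProduct
        exact Finset.single_le_sum (f := fun j => x j * x j)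
          (fun j _ => mul_self_nonneg _) (Finset.mem_univ i)
      linarith
    · by_contra h
      push_neg at h
      have h1 : (1:ℝ) < x i * x i := by nlinarith
      have h2 : x i * x i ≤ nsq x := by
        unfold nsq dotProduct
        exact Finset.single_le_sum (f := fun j => x j * x j)
          (fun j _ => mul_self_nonneg _) (Finset.mem_univ i)
      linarith
  have hcl : IsClosed {x : m → ℝ | nsq x = 1} :=
    isClosed_eq (continuous_dot _ _ continuous_id continuous_id) continuous_const
  exact (isCompact_Icc).of_isClosed_subset hcl hsub

/-- The Rayleigh quotient attains its min on the sphere, and it equals `lambdaMin`. -/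
theorem exists_rayleigh_min :
    ∃ u : m → ℝ, nsq u = 1 ∧ u ⬝ᵥ A.mulVec u = lambdaMin A ∧
      ∀ v : m → ℝ, nsq v = 1 → lambdaMin A ≤ v ⬝ᵥ A.mulVec v := by
  obtain ⟨u0, hu0⟩ := sphere_nonempty (m := m)
  obtain ⟨u, hu, hmin⟩ := (isCompact_sphere' (m := m)).exists_isMinOn ⟨u0, hu0⟩
    (continuous_qf A).continuousOn
  have : Nonempty {x : m → ℝ // x ⬝ᵥ x = 1} := ⟨⟨u0, hu0⟩⟩
  have hbdd : BddBelow (Set.range fun x : {x : m → ℝ // x ⬝ᵥ x = 1} =>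
      (x : m → ℝ) ⬝ᵥ A.mulVec (x : m → ℝ)) := by
    refine ⟨u ⬝ᵥ A.mulVec u, ?_⟩
    rintro y ⟨⟨v, hv⟩, rfl⟩
    exact hmin hv
  have heq : lambdaMin A = u ⬝ᵥ A.mulVec u := by
    apply le_antisymm
    · exact ciInf_le hbdd ⟨u, hu⟩
    · exact le_ciInf fun ⟨v, hv⟩ => hmin hv
  exact ⟨u, hu, heq.symm, fun v hv => heq ▸ hmin hv⟩

theorem lambdaMin_le_qf (z : m → ℝ) : lambdaMin A * nsq z ≤ z ⬝ᵥ A.mulVec z := by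
  obtain ⟨u, _, _, hmin⟩ := exists_rayleigh_min A
  rcases eq_or_ne z 0 with rfl | hz
  · simp [nsq]
  · have hpos : 0 < nsq z := lt_of_le_of_ne (nsq_nonneg z) (fun h => hz (nsq_eq_zero.mp h.symm))
    set c : ℝ := (Real.sqrt (nsq z))⁻¹ with hc
    have hc2 : c ^ 2 = (nsq z)⁻¹ := by
      rw [hc, ← Real.sqrt_inv, Real.sq_sqrt (inv_nonneg.mpr hpos.le)]
    have hcz : nsq (c • z) = 1 := by
      rw [nsq_smul, hc2]; exact inv_mul_cancel₀ hpos.ne'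
    have hle := hmin (c • z) hcz
    have hq : (c • z) ⬝ᵥ A.mulVec (c • z) = c^2 * (z ⬝ᵥ A.mulVec z) := by
      simp [smul_dotProduct, Matrix.mulVec_smul, dotProduct_smul, smul_eq_mul]
      ring
    rw [hq, hc2] at hle
    have hinv : nsq z * (nsq z)⁻¹ = 1 := mul_inv_cancel₀ hpos.ne'
    have h3 := mul_le_mul_of_nonneg_left hle hpos.le
    rw [← mul_assoc, hinv, one_mul] at h3
    linarith

theorem qf_symm (hA : A.IsSymm) (v w : m → ℝ) : v ⬝ᵥ A.mulVec w = w ⬝ᵥ A.mulVec v := by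
  rw [Matrix.dotProduct_mulVec, ← Matrix.mulVec_transpose, hA.eq, dotProduct_comm]

theorem eigen_of_rayleigh_min (hA : A.IsSymm) {u : m → ℝ} (hu : nsq u = 1)
    (hmin : u ⬝ᵥ A.mulVec u = lambdaMin A) :
    A.mulVec u = lambdaMin A • u := by
  set lam := lambdaMin A with hlam
  set y : m → ℝ := A.mulVec u - lam • u with hy
  have hu' : u ⬝ᵥ u = 1 := hu
  have hcc0 : 0 ≤ y ⬝ᵥ A.mulVec y - lam * (y ⬝ᵥ y) := by
    have := lambdaMin_le_qf A y
    unfold nsq at this; rw [← hlam] at this; linarith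
  have quad : ∀ s : ℝ, 0 ≤ 2*s*(y ⬝ᵥ A.mulVec u - lam * (y ⬝ᵥ u))
      + s^2*(y ⬝ᵥ A.mulVec y - lam * (y ⬝ᵥ y)) := by
    intro s
    have h0 := lambdaMin_le_qf A (u + s • y)
    rw [← hlam] at h0
    simp only [nsq, dotProduct_add, add_dotProduct, dotProduct_smul,
      smul_dotProduct, Matrix.mulVec_add, Matrix.mulVec_smul, smul_eq_mul] at h0
    rw [qf_symm A hA u y, dotProduct_comm u y, hu', hmin] at h0
    nlinarith [h0]
  have hae : y ⬝ᵥ A.mulVec u - lam * (y ⬝ᵥ u) = y ⬝ᵥ y := by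
    rw [hy]
    simp only [dotProduct_sub, dotProduct_smul, smul_eq_mul]
  have ha0 : y ⬝ᵥ y = 0 := by
    set a := y ⬝ᵥ y with ha
    set cc := y ⬝ᵥ A.mulVec y - lam * (y ⬝ᵥ y) with hcc
    have hq := quad (-(a)/(cc+1))
    rw [hae] at hq
    have hpos : (0:ℝ) < cc + 1 := by rw [hcc]; linarith
    have e1 : 2 * (-a / (cc + 1)) * a + (-a / (cc + 1)) ^ 2 * cc
        = -(a^2*(cc+2))/(cc+1)^2 := by
      field_simp; ring
    rw [e1] at hq
    have h2 := mul_nonneg hq (le_of_lt (pow_pos hpos 2))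
    rw [div_mul_cancel₀ _ (by positivity : ((cc:ℝ)+1)^2 ≠ 0)] at h2
    have h3 : a^2 ≤ 0 := by nlinarith [hcc0]
    have h4 : a = 0 := by nlinarith [sq_nonneg a]
    exact h4
  have hyz : y = 0 := dotProduct_self_eq_zero.mp ha0
  rw [hy] at hyz
  rw [sub_eq_zero] at hyz
  exact hyz

end Ray

/-- A lower semicontinuous `EReal`-valued function attains its min on a nonempty compact set. -/
theorem lsc_exists_min {X : Type*} [TopologicalSpace X] {K : Set X} (hK : IsCompact K)
    (hKc : IsClosed K) (hne : K.Nonempty) {f : X → EReal} (hf : LowerSemicontinuous f) :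
    ∃ x ∈ K, ∀ y ∈ K, f x ≤ f y := by
  set mv := sInf (f '' K) with hmv
  by_cases hm : mv = ⊤
  · obtain ⟨x, hx⟩ := hne
    refine ⟨x, hx, fun y hy => ?_⟩
    have : f y = ⊤ := top_le_iff.mp (hm ▸ sInf_le ⟨y, hy, rfl⟩)
    simp [this]
  · have hlt : mv < ⊤ := lt_top_iff_ne_top.mpr hm
    have hNE : Nonempty {c : EReal // mv < c} := ⟨⟨⊤, hlt⟩⟩
    set t : {c : EReal // mv < c} → Set X := fun c => {y ∈ K | f y ≤ c.1} with ht
    have htn : ∀ c, (t c).Nonempty := by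
      rintro ⟨c, hc⟩
      obtain ⟨v, ⟨y, hyK, rfl⟩, hvc⟩ := exists_lt_of_csInf_lt (hne.image f) (hmv ▸ hc)
      exact ⟨y, hyK, hvc.le⟩
    have htcl : ∀ c, IsClosed (t c) := by
      rintro ⟨c, hc⟩
      exact hKc.inter (lowerSemicontinuous_iff_isClosed_preimage.mp hf c)
    have htc : ∀ c, IsCompact (t c) := fun c =>
      hK.of_isClosed_subset (htcl c) (sep_subset _ _)
    have htd : Directed (· ⊇ ·) t := by
      rintro ⟨c, hc⟩ ⟨d, hd⟩
      refine ⟨⟨min c d, lt_min hc hd⟩, ?_, ?_⟩ <;>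
        exact fun y hy => ⟨hy.1, hy.2.trans (by simp)⟩
    obtain ⟨x, hx⟩ := IsCompact.nonempty_iInter_of_directed_nonempty_isCompact_isClosed
      t htd htn htc htcl
    simp only [Set.mem_iInter] at hx
    have hxK : x ∈ K := (hx ⟨⊤, hlt⟩).1
    refine ⟨x, hxK, fun y hy => ?_⟩
    have hfx : f x ≤ mv := by
      apply le_of_forall_gt_imp_ge_of_dense
      intro c hc
      exact (hx ⟨c, hc⟩).2
    exact hfx.trans (sInf_le ⟨y, hy, rfl⟩)

section BmatSec

variable {n : ℕ} (g : Fin n → ℝ) (H : Matrix (Fin n) (Fin n) ℝ) (t : ℝ)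

theorem cons_dot {a b : ℝ} {x y : Fin n → ℝ} :
    (Fin.cons a x : Fin (n+1) → ℝ) ⬝ᵥ (Fin.cons b y) = a * b + x ⬝ᵥ y := by
  simp [dotProduct, Fin.sum_univ_succ]

theorem qform_cons (a : ℝ) (x : Fin n → ℝ) :
    (Fin.cons a x : Fin (n+1) → ℝ) ⬝ᵥ (Bmat g H t).mulVec (Fin.cons a x)
      = t * a^2 + 2*a*(g ⬝ᵥ x) + x ⬝ᵥ H.mulVec x := by
  have hmv : (Bmat g H t).mulVec (Fin.cons a x)
      = Fin.cons (t*a + g ⬝ᵥ x) (fun i => g i * a + (H i) ⬝ᵥ x) := by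
    funext i
    refine Fin.cases ?_ (fun j => ?_) i
    · show (Fin.cons t g : Fin (n+1) → ℝ) ⬝ᵥ (Fin.cons a x) = _
      rw [cons_dot]; simp
    · show (Fin.cons (g j) (H j) : Fin (n+1) → ℝ) ⬝ᵥ (Fin.cons a x) = _
      rw [cons_dot]; simp
  rw [hmv, cons_dot]
  have : x ⬝ᵥ (fun i => g i * a + (H i) ⬝ᵥ x) = a * (g ⬝ᵥ x) + x ⬝ᵥ H.mulVec x := by
    unfold dotProduct Matrix.mulVec
    rw [Finset.mul_sum, ← Finset.sum_add_distrib]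
    exact Finset.sum_congr rfl fun i _ => by unfold dotProduct; ring
  rw [this]; ring

theorem qform_affine (z : Fin (n+1) → ℝ) :
    z ⬝ᵥ (Bmat g H t).mulVec z = z ⬝ᵥ (Bmat g H 0).mulVec z + t * (z 0)^2 := by
  have h1 := qform_cons g H t (z 0) (Fin.tail z)
  have h2 := qform_cons g H 0 (z 0) (Fin.tail z)
  rw [Fin.cons_self_tail z] at h1 h2
  rw [h1, h2]; ring

theorem Bmat_isSymm (hH : H.IsSymm) : (Bmat g H t).IsSymm := by
  rw [Matrix.IsSymm]
  funext i j
  rw [Matrix.transpose_apply]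
  refine Fin.cases ?_ (fun i' => ?_) i <;> refine Fin.cases ?_ (fun j' => ?_) j <;>
    simp [Bmat]
  have := congrFun (congrFun hH j') i'
  rw [Matrix.transpose_apply] at this
  exact this.symm

theorem nsq_cons (a : ℝ) (x : Fin n → ℝ) :
    nsq (Fin.cons a x : Fin (n+1) → ℝ) = a^2 + nsq x := by
  unfold nsq; rw [cons_dot]; ring_nf

theorem lamB_mono : Monotone (fun t => lambdaMin (Bmat g H t)) := by
  intro s t hst
  obtain ⟨u, hu1, hu2, -⟩ := exists_rayleigh_min (Bmat g H t)
  obtain ⟨-, -, -, hmin⟩ := exists_rayleigh_min (Bmat g H s)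
  calc lambdaMin (Bmat g H s) ≤ u ⬝ᵥ (Bmat g H s).mulVec u := hmin u hu1
    _ ≤ u ⬝ᵥ (Bmat g H t).mulVec u := by
        rw [qform_affine g H s u, qform_affine g H t u]
        nlinarith [sq_nonneg (u 0)]
    _ = lambdaMin (Bmat g H t) := hu2

end BmatSec

section Khat

variable {n : ℕ} (ρ : ℝ → EReal) (g : Fin n → ℝ) (H : Matrix (Fin n) (Fin n) ℝ)

theorem khat_le (t γ : ℝ) (hγ : 0 ≤ γ) :
    khat ρ g H t ≤ ρ (γ - 1) + ((γ * lambdaMin (Bmat g H t) : ℝ) : EReal) :=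
  iInf_le _ (⟨γ, hγ⟩ : {γ : ℝ // 0 ≤ γ})

theorem khat_nonpos (h1 : Assump1 ρ) (t : ℝ) : khat ρ g H t ≤ 0 := by
  have h := khat_le ρ g H t 0 le_rfl
  rw [zero_sub, h1.2.1 (-1) (by norm_num)] at h
  simpa using h

theorem phi_lb (hρ : RhoBasic ρ) (h2 : Assump2 ρ) (lam : ℝ) :
    ∃ c R : ℝ, ∀ γ : ℝ, 0 ≤ γ →
      ((c : EReal) ≤ ρ (γ-1) + ((γ * lam : ℝ) : EReal) ∧
       (R ≤ γ → (1:EReal) ≤ ρ (γ-1) + ((γ * lam : ℝ) : EReal))) := by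
  obtain ⟨T, hT⟩ := (h2 (1 - lam)).exists_forall_of_atTop
  set T' := max T 0 with hT'
  refine ⟨min (-(T'+1)*|lam|) (lam - 1), max (T'+1) (2 - lam), fun γ hγ => ?_⟩
  by_cases hcase : T ≤ γ - 1
  · have hge := hT (γ-1) hcase
    have hsum : (((1-lam)*(γ-1) + γ*lam : ℝ) : EReal)
        ≤ ρ (γ-1) + ((γ * lam : ℝ) : EReal) := by
      rw [EReal.coe_add]
      exact add_le_add_left hge _
    constructor
    · refine le_trans ?_ hsum
      rw [EReal.coe_le_coe_iff]
      have : min (-(T'+1)*|lam|) (lam - 1) ≤ lam - 1 := min_le_right _ _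
      nlinarith
    · intro hR
      refine le_trans ?_ hsum
      rw [show ((1:EReal)) = ((1:ℝ):EReal) from rfl, EReal.coe_le_coe_iff]
      have : 2 - lam ≤ γ := le_trans (le_max_right _ _) hR
      nlinarith
  · push_neg at hcase
    have hγub : γ < T' + 1 := by
      have : T ≤ T' := le_max_left _ _
      linarith
    have hsum : ((γ*lam : ℝ) : EReal) ≤ ρ (γ-1) + ((γ * lam : ℝ) : EReal) := by
      nth_rewrite 1 [show ((γ*lam : ℝ) : EReal) = 0 + ((γ*lam:ℝ):EReal) by rw [zero_add]]
      exact add_le_add_left (hρ.1 _) _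
    constructor
    · refine le_trans ?_ hsum
      rw [EReal.coe_le_coe_iff]
      have h1' : min (-(T'+1)*|lam|) (lam - 1) ≤ -(T'+1)*|lam| := min_le_left _ _
      have h2' : (0:ℝ) ≤ T' + 1 := by positivity
      nlinarith [abs_nonneg lam, neg_abs_le lam, le_abs_self lam]
    · intro hR
      exfalso
      have : T' + 1 ≤ γ := le_trans (le_max_left _ _) hR
      linarith

theorem khat_lb (hρ : RhoBasic ρ) (h2 : Assump2 ρ) (t : ℝ) :
    ∃ c : ℝ, (c : EReal) ≤ khat ρ g H t := by
  obtain ⟨c, R, h⟩ := phi_lb ρ hρ h2 (lambdaMin (Bmat g H t))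
  exact ⟨c, le_iInf fun γ => (h γ.1 γ.2).1⟩

def kR {n : ℕ} (ρ : ℝ → EReal) (g : Fin n → ℝ) (H : Matrix (Fin n) (Fin n) ℝ) (t : ℝ) : ℝ :=
  (khat ρ g H t).toReal

theorem khat_ne_top (h1 : Assump1 ρ) (t : ℝ) : khat ρ g H t ≠ ⊤ :=
  ne_top_of_le_ne_top (by simp) (khat_nonpos ρ g H h1 t)

theorem khat_ne_bot (hρ : RhoBasic ρ) (h2 : Assump2 ρ) (t : ℝ) : khat ρ g H t ≠ ⊥ := by
  obtain ⟨c, hc⟩ := khat_lb ρ g H hρ h2 t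
  exact ne_bot_of_le_ne_bot (by simp) hc

theorem khat_eq_kR (hρ : RhoBasic ρ) (h1 : Assump1 ρ) (h2 : Assump2 ρ) (t : ℝ) :
    khat ρ g H t = ((kR ρ g H t : ℝ) : EReal) :=
  (EReal.coe_toReal (khat_ne_top ρ g H h1 t) (khat_ne_bot ρ g H hρ h2 t)).symm

end Khat

section Khat2

variable {n : ℕ} (ρ : ℝ → EReal) (g : Fin n → ℝ) (H : Matrix (Fin n) (Fin n) ℝ)

theorem khat_attained (hρ : RhoBasic ρ) (h1 : Assump1 ρ) (h2 : Assump2 ρ) (t : ℝ) :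
    ∃ γ : ℝ, 0 ≤ γ ∧
      khat ρ g H t = ρ (γ-1) + ((γ * lambdaMin (Bmat g H t) : ℝ) : EReal) := by
  set lam := lambdaMin (Bmat g H t) with hlam
  obtain ⟨c, R, hcR⟩ := phi_lb ρ hρ h2 lam
  set R' := max R 0 with hR'
  have hlsc : LowerSemicontinuous (fun γ : ℝ => ρ (γ-1) + ((γ*lam:ℝ):EReal)) := by
    apply LowerSemicontinuous.add'
    · exact LowerSemicontinuous.comp (g := fun γ : ℝ => γ - 1) hρ.2.2.1 (by continuity)
    · exact (continuous_coe_real_ereal.comp (by continuity)).lowerSemicontinuous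
    · intro x
      apply EReal.continuousAt_add
      · exact Or.inr (EReal.coe_ne_bot _)
      · exact Or.inl (ne_bot_of_le_ne_bot (by simp) (hρ.1 (x-1)))
  obtain ⟨γ, hγmem, hγmin⟩ := lsc_exists_min isCompact_Icc isClosed_Icc
    (⟨0, by simp [hR', le_max_right]⟩ : (Set.Icc (0:ℝ) R').Nonempty) hlsc
  refine ⟨γ, hγmem.1, le_antisymm (khat_le ρ g H t γ hγmem.1) (le_iInf ?_)⟩
  rintro ⟨γ', hγ'⟩
  by_cases hRb : γ' ≤ R'
  · exact hγmin γ' ⟨hγ', hRb⟩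
  · push_neg at hRb
    have h1le : (1:EReal) ≤ ρ (γ'-1) + ((γ'*lam:ℝ):EReal) :=
      (hcR γ' hγ').2 (le_trans (le_trans (le_max_left _ _) hRb.le) le_rfl)
    have h0 : ρ (γ-1) + ((γ*lam:ℝ):EReal) ≤ 0 := by
      have := hγmin 0 ⟨le_rfl, le_max_right _ _⟩
      rw [zero_sub, h1.2.1 (-1) (by norm_num)] at this
      simpa using this
    exact h0.trans ((by norm_num : (0:EReal) ≤ 1).trans h1le)

/-- Attainment of `khat` by an optimal pair `(γ, u)`. -/
theorem khat_pair (hρ : RhoBasic ρ) (h1 : Assump1 ρ) (h2 : Assump2 ρ) (t : ℝ) :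
    ∃ γ : ℝ, ∃ u : Fin (n+1) → ℝ, 0 ≤ γ ∧ nsq u = 1 ∧
      u ⬝ᵥ (Bmat g H t).mulVec u = lambdaMin (Bmat g H t) ∧
      khat ρ g H t = ρ (γ-1) + ((γ * lambdaMin (Bmat g H t) : ℝ) : EReal) := by
  obtain ⟨γ, hγ, heq⟩ := khat_attained ρ g H hρ h1 h2 t
  obtain ⟨u, hu1, hu2, -⟩ := exists_rayleigh_min (Bmat g H t)
  exact ⟨γ, u, hγ, hu1, hu2, heq⟩

/-- From the `EReal` attainment equation, `ρ (γ-1)` is a finite real. -/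
theorem rho_fin_of_eq (hρ : RhoBasic ρ) (h1 : Assump1 ρ) (h2 : Assump2 ρ) {t γ : ℝ}
    (heq : khat ρ g H t = ρ (γ-1) + ((γ * lambdaMin (Bmat g H t) : ℝ) : EReal)) :
    ρ (γ-1) = ((kR ρ g H t - γ * lambdaMin (Bmat g H t) : ℝ) : EReal) := by
  have hfin : ρ (γ-1) ≠ ⊤ := by
    intro htop
    rw [htop] at heq
    rw [EReal.top_add_of_ne_bot (EReal.coe_ne_bot _)] at heq
    exact khat_ne_top ρ g H h1 t heq
  have hbot : ρ (γ-1) ≠ ⊥ := ne_bot_of_le_ne_bot (by simp) (hρ.1 _)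
  rw [← EReal.coe_toReal hfin hbot] at heq ⊢
  rw [khat_eq_kR ρ g H hρ h1 h2 t, ← EReal.coe_add] at heq
  rw [EReal.coe_eq_coe_iff] at heq ⊢
  linarith

/-- Weak duality. -/
theorem weak_duality (hρ : RhoBasic ρ) (h1 : Assump1 ρ) (t : ℝ) (x : Fin n → ℝ) :
    khat ρ g H t - (t : EReal) ≤ (quadObj g H x : EReal) + ρ (nsq x) := by
  set γ : ℝ := 1 + nsq x with hγdef
  have hγ : 0 ≤ γ := by have := nsq_nonneg x; linarith
  have h1le := khat_le ρ g H t γ hγ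
  have hsq : γ - 1 = nsq x := by rw [hγdef]; ring
  have hz : nsq (Fin.cons 1 x : Fin (n+1) → ℝ) = γ := by
    rw [nsq_cons]; rw [hγdef]; ring
  have hray := lambdaMin_le_qf (Bmat g H t) (Fin.cons 1 x : Fin (n+1) → ℝ)
  rw [hz, qform_cons] at hray
  have hq : γ * lambdaMin (Bmat g H t) ≤ t + quadObj g H x := by
    unfold quadObj; nlinarith [hray]
  calc khat ρ g H t - (t:EReal)
      ≤ (ρ (γ-1) + ((γ * lambdaMin (Bmat g H t) : ℝ) : EReal)) - (t:EReal) :=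
        EReal.sub_le_sub h1le le_rfl
    _ ≤ (ρ (nsq x) + ((t + quadObj g H x : ℝ) : EReal)) - (t:EReal) := by
        rw [hsq]
        exact EReal.sub_le_sub (add_le_add_right (EReal.coe_le_coe_iff.mpr hq) _) le_rfl
    _ = (quadObj g H x : EReal) + ρ (nsq x) := by
        rw [show ((t + quadObj g H x : ℝ) : EReal)
            = ((quadObj g H x : ℝ) : EReal) + ((t:ℝ) : EReal) by
          rw [add_comm (t:ℝ), EReal.coe_add]]
        rw [← add_assoc, EReal.add_sub_cancel_right, add_comm]

end Khat2

def Dfun {n : ℕ} (ρ : ℝ → EReal) (g : Fin n → ℝ) (H : Matrix (Fin n) (Fin n) ℝ) (t : ℝ) : ℝ :=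
  kR ρ g H t - t

section Dsec

variable {n : ℕ} (ρ : ℝ → EReal) (g : Fin n → ℝ) (H : Matrix (Fin n) (Fin n) ℝ)
theorem kR_nonpos (hρ : RhoBasic ρ) (h1 : Assump1 ρ) (h2 : Assump2 ρ) (t : ℝ) :
    kR ρ g H t ≤ 0 := by
  have h := khat_nonpos ρ g H h1 t
  rw [khat_eq_kR ρ g H hρ h1 h2 t] at h
  exact_mod_cast h

/-- The fundamental estimate: if `(γ, u)` is an optimal pair at `t`, then
`D(t') ≤ D(t) + (t' - t) * (γ u₀² - 1)` for all `t'`. -/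
theorem D_est (hρ : RhoBasic ρ) (h1 : Assump1 ρ) (h2 : Assump2 ρ) {t t' γ : ℝ} {u : Fin (n+1) → ℝ} (hγ : 0 ≤ γ) (hu : nsq u = 1)
    (humin : u ⬝ᵥ (Bmat g H t).mulVec u = lambdaMin (Bmat g H t))
    (heq : khat ρ g H t = ρ (γ-1) + ((γ * lambdaMin (Bmat g H t) : ℝ) : EReal)) :
    Dfun ρ g H t' ≤ Dfun ρ g H t + (t' - t) * (γ * (u 0)^2 - 1) := by
  obtain ⟨-, -, -, hmin'⟩ := exists_rayleigh_min (Bmat g H t')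
  have hlam' : lambdaMin (Bmat g H t') ≤
      lambdaMin (Bmat g H t) + (t' - t) * (u 0)^2 := by
    have := hmin' u hu
    rw [qform_affine g H t' u] at this
    rw [qform_affine g H t u] at humin
    linarith
  have hkey : khat ρ g H t' ≤
      ((kR ρ g H t - γ * lambdaMin (Bmat g H t)
        + γ * (lambdaMin (Bmat g H t) + (t' - t) * (u 0)^2) : ℝ) : EReal) := by
    calc khat ρ g H t' ≤ ρ (γ-1) + ((γ * lambdaMin (Bmat g H t') : ℝ) : EReal) :=
          khat_le ρ g H t' γ hγ
      _ ≤ ρ (γ-1) + ((γ * (lambdaMin (Bmat g H t) + (t' - t) * (u 0)^2) : ℝ) : EReal) :=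
          add_le_add_right (EReal.coe_le_coe_iff.mpr
            (mul_le_mul_of_nonneg_left hlam' hγ)) _
      _ = _ := by
          rw [rho_fin_of_eq ρ g H hρ h1 h2 heq, ← EReal.coe_add]
  rw [khat_eq_kR ρ g H hρ h1 h2 t', EReal.coe_le_coe_iff] at hkey
  unfold Dfun
  nlinarith [hkey]

theorem D_max_exists (hρ : RhoBasic ρ) (h1 : Assump1 ρ) (h2 : Assump2 ρ) : ∃ ts : ℝ, ∀ t : ℝ, Dfun ρ g H t ≤ Dfun ρ g H ts := by
  -- Upper semicontinuity (via the fundamental estimate)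
  have husc : LowerSemicontinuous (fun t => ((-(Dfun ρ g H t) : ℝ) : EReal)) := by
    intro t₀ c hc
    obtain ⟨γ, u, hγ, hu, humin, heq⟩ := khat_pair ρ g H hρ h1 h2 t₀
    set C := |γ * (u 0)^2 - 1| with hC
    have key : ∀ t', Dfun ρ g H t' ≤ Dfun ρ g H t₀ + |t' - t₀| * C := by
      intro t'
      have := D_est ρ g H hρ h1 h2 hγ hu humin heq (t' := t')
      have habs : (t' - t₀) * (γ * (u 0)^2 - 1) ≤ |t' - t₀| * C := by
        rw [hC, ← abs_mul]
        exact le_abs_self _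
      linarith
    match c, hc with
    | ⊥, _ => exact Filter.Eventually.of_forall fun _ => EReal.bot_lt_coe _
    | ⊤, hc => exact absurd hc (by simp)
    | (c : ℝ), hc =>
      simp only [gt_iff_lt, EReal.coe_lt_coe_iff] at hc
      have hCpos : 0 < C + 1 := by positivity
      rw [Metric.eventually_nhds_iff]
      refine ⟨(-(Dfun ρ g H t₀) - c) / (C + 1), div_pos (by linarith) hCpos,
        fun t' hdist => ?_⟩
      simp only [gt_iff_lt, EReal.coe_lt_coe_iff]
      rw [Real.dist_eq] at hdist
      have h3 : |t' - t₀| * C ≤ |t' - t₀| * (C + 1) := by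
        nlinarith [abs_nonneg (t' - t₀)]
      have h4 : |t' - t₀| * (C + 1) < (-(Dfun ρ g H t₀) - c) := by
        rw [← lt_div_iff₀ hCpos]
        exact hdist
      have := key t'
      linarith
  -- Coercivity bounds
  have b1 : ∀ t, Dfun ρ g H t ≤ -t := by
    intro t
    have := kR_nonpos ρ g H hρ h1 h2 t
    unfold Dfun; linarith
  obtain ⟨t₀, ht₀pos, ht₀fin⟩ := h1.2.2
  set Cr := (ρ (t₀/2)).toReal with hCr
  have hrfin : ρ (t₀/2) = ((Cr : ℝ) : EReal) := by
    have hle : ρ (t₀/2) ≤ ρ t₀ := h1.1 (by linarith)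
    exact (EReal.coe_toReal (ne_top_of_le_ne_top ht₀fin.ne hle)
      (ne_bot_of_le_ne_bot (by simp) (hρ.1 _))).symm
  have b2 : ∀ t ≤ 0, Dfun ρ g H t ≤ Cr + (t₀/2) * t := by
    intro t ht
    have hlamt : lambdaMin (Bmat g H t) ≤ t := by
      obtain ⟨-, -, -, hmin⟩ := exists_rayleigh_min (Bmat g H t)
      have h0 := hmin (Fin.cons 1 (0 : Fin n → ℝ)) (by rw [nsq_cons]; simp [nsq])
      rw [qform_cons] at h0
      simpa using h0
    have hγbpos : (0:ℝ) ≤ 1 + t₀/2 := by positivity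
    have hkle : khat ρ g H t ≤ ((Cr + (1 + t₀/2) * t : ℝ) : EReal) := by
      calc khat ρ g H t ≤ ρ ((1 + t₀/2) - 1) + (((1 + t₀/2) * lambdaMin (Bmat g H t) :ℝ):EReal) :=
            khat_le ρ g H t (1 + t₀/2) hγbpos
        _ ≤ ((Cr : ℝ):EReal) + (((1 + t₀/2) * t : ℝ) : EReal) := by
            apply add_le_add
            · rw [show (1 + t₀/2) - 1 = t₀/2 by ring, hrfin]
            · exact EReal.coe_le_coe_iff.mpr (mul_le_mul_of_nonneg_left hlamt hγbpos)
        _ = _ := by rw [← EReal.coe_add]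
    rw [khat_eq_kR ρ g H hρ h1 h2 t, EReal.coe_le_coe_iff] at hkle
    unfold Dfun
    nlinarith [hkle]
  -- radius
  set D0 := Dfun ρ g H 0 with hD0
  set R : ℝ := max (|D0| + 1) ((Cr + |D0| + 1) / (t₀/2)) with hR
  have hRpos : 0 ≤ R := le_trans (by positivity) (le_max_left _ _)
  obtain ⟨ts, hts_mem, hts⟩ := lsc_exists_min isCompact_Icc isClosed_Icc
    (⟨0, by constructor <;> simp [hRpos, neg_nonpos_of_nonneg hRpos]⟩ :
      (Set.Icc (-R) R).Nonempty) husc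
  refine ⟨ts, fun t => ?_⟩
  have hDle : ∀ t' ∈ Set.Icc (-R) R, Dfun ρ g H t' ≤ Dfun ρ g H ts := by
    intro t' ht'
    have := hts t' ht'
    rw [EReal.coe_le_coe_iff] at this
    linarith
  have hD0le : D0 ≤ Dfun ρ g H ts := hDle 0 (by constructor <;>
    simp [hRpos, neg_nonpos_of_nonneg hRpos])
  by_cases hmem : t ∈ Set.Icc (-R) R
  · exact hDle t hmem
  · simp only [Set.mem_Icc, not_and_or, not_le] at hmem
    rcases hmem with hlt | hgt
    · -- t < -R : use b2
      have ht0 : t ≤ 0 := by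
        have : (0:ℝ) ≤ R := hRpos
        linarith
      have h5 := b2 t ht0
      have h6 : (Cr + |D0| + 1) / (t₀/2) ≤ R := le_max_right _ _
      have ht₀2 : (0:ℝ) < t₀/2 := by linarith
      have h7 : Cr + (t₀/2) * t < D0 := by
        have h8 : (t₀/2) * t < (t₀/2) * (-R) := by
          apply mul_lt_mul_of_pos_left _ ht₀2
          linarith
        have h9 : (t₀/2) * (-R) ≤ -(Cr + |D0| + 1) := by
          rw [div_le_iff₀ ht₀2] at h6
          nlinarith
        have := abs_nonneg D0
        have := neg_abs_le D0
        nlinarith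
      linarith
    · -- R < t : use b1
      have h5 := b1 t
      have h6 : |D0| + 1 ≤ R := le_max_left _ _
      have := neg_abs_le D0
      nlinarith

end Dsec

section Limit

variable {n : ℕ} (ρ : ℝ → EReal) (g : Fin n → ℝ) (H : Matrix (Fin n) (Fin n) ℝ)

theorem limit_pair (hρ : RhoBasic ρ) (h1 : Assump1 ρ) (h2 : Assump2 ρ)
    {ts : ℝ} (hmax : ∀ t, Dfun ρ g H t ≤ Dfun ρ g H ts) (σ : ℝ) (hσ : σ ≠ 0) :
    ∃ γ : ℝ, ∃ u : Fin (n+1) → ℝ, 0 ≤ γ ∧ nsq u = 1 ∧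
      σ * (γ * (u 0)^2 - 1) ≤ 0 ∧
      ρ (γ-1) + ((γ * (u ⬝ᵥ (Bmat g H ts).mulVec u) : ℝ) : EReal) ≤ khat ρ g H ts := by
  -- the sequence of perturbed points
  set tk : ℕ → ℝ := fun k => ts + σ/(k+1) with htk
  have htend : Tendsto tk atTop (𝓝 ts) := by
    rw [show (𝓝 ts) = 𝓝 (ts + σ * 0) by norm_num]
    apply Tendsto.const_add
    rw [show (fun k : ℕ => σ/(k+1)) = (fun k : ℕ => σ * (1/(k+1))) by
      funext k; ring]
    exact (tendsto_one_div_add_atTop_nhds_zero_nat).const_mul σ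
  choose γs us hγs hus humin heq using fun k => khat_pair ρ g H hρ h1 h2 (tk k)
  -- one-sided inequality
  have hside : ∀ k, σ * (γs k * (us k 0)^2 - 1) ≤ 0 := by
    intro k
    have hest := D_est ρ g H hρ h1 h2 (hγs k) (hus k) (humin k) (heq k) (t' := ts)
    have hmx := hmax (tk k)
    have hts' : ts - tk k = -(σ/(k+1)) := by rw [htk]; ring
    rw [hts'] at hest
    have hkpos : (0:ℝ) < k + 1 := by positivity
    have h5 : 0 ≤ -(σ/(k+1)) * (γs k * (us k 0)^2 - 1) := by linarith
    rw [neg_mul, neg_nonneg] at h5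
    have := mul_nonpos_iff.mp h5
    rcases this with ⟨ha, hb⟩ | ⟨ha, hb⟩
    · have h6 : 0 ≤ σ := by
        by_contra hneg
        push_neg at hneg
        have : σ/(k+1) < 0 := div_neg_of_neg_of_pos hneg hkpos
        linarith
      exact mul_nonpos_of_nonneg_of_nonpos h6 hb
    · have h6 : σ ≤ 0 := by
        by_contra hpos
        push_neg at hpos
        have : 0 < σ/(k+1) := div_pos hpos hkpos
        linarith
      exact mul_nonpos_of_nonpos_of_nonneg h6 hb
  -- uniform bound on γs
  have hlam_lb : ∀ k, lambdaMin (Bmat g H (ts - |σ|)) ≤ lambdaMin (Bmat g H (tk k)) := by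
    intro k
    apply lamB_mono
    rw [htk]
    have hkpos : (0:ℝ) < k + 1 := by positivity
    have h7 : |σ/(k+1)| ≤ |σ| := by
      rw [abs_div]
      rw [abs_of_pos hkpos]
      apply div_le_self (abs_nonneg σ)
      linarith
    have := neg_abs_le (σ/(k+1))
    linarith [this, h7]
  obtain ⟨T, hT⟩ := (h2 (1 - lambdaMin (Bmat g H (ts - |σ|)))).exists_forall_of_atTop
  set lamb := lambdaMin (Bmat g H (ts - |σ|)) with hlamb
  set Γ : ℝ := max (T+1) (2 - lamb) with hΓ
  have hγbound : ∀ k, γs k ≤ Γ := by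
    intro k
    by_contra hgt
    push_neg at hgt
    have h8 : T ≤ γs k - 1 := by
      have : T + 1 ≤ Γ := le_max_left _ _
      linarith
    have h9 := hT (γs k - 1) h8
    rw [rho_fin_of_eq ρ g H hρ h1 h2 (heq k), EReal.coe_le_coe_iff] at h9
    have h10 : γs k * lamb ≤ γs k * lambdaMin (Bmat g H (tk k)) :=
      mul_le_mul_of_nonneg_left (hlam_lb k) (hγs k)
    have h11 := kR_nonpos ρ g H hρ h1 h2 (tk k)
    have h12 : 2 - lamb ≤ Γ := le_max_right _ _
    nlinarith [h9, h10, h11, h12, hgt]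
  -- compactness and subsequence
  have hKcompact : IsCompact ((Set.Icc (0:ℝ) Γ) ×ˢ {u : Fin (n+1) → ℝ | nsq u = 1}) :=
    isCompact_Icc.prod isCompact_sphere'
  have hmem : ∀ k, ((γs k, us k) : ℝ × (Fin (n+1) → ℝ)) ∈
      (Set.Icc (0:ℝ) Γ) ×ˢ {u : Fin (n+1) → ℝ | nsq u = 1} := by
    intro k
    exact ⟨⟨hγs k, hγbound k⟩, hus k⟩
  obtain ⟨⟨γh, uh⟩, hmemh, φ, hφmono, hφtend⟩ := hKcompact.tendsto_subseq hmem
  have hγtend : Tendsto (fun k => γs (φ k)) atTop (𝓝 γh) :=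
    (continuous_fst.tendsto _).comp hφtend
  have hutend : Tendsto (fun k => us (φ k)) atTop (𝓝 uh) :=
    (continuous_snd.tendsto _).comp hφtend
  have httend : Tendsto (fun k => tk (φ k)) atTop (𝓝 ts) :=
    htend.comp hφmono.tendsto_atTop
  refine ⟨γh, uh, hmemh.1.1, hmemh.2, ?_, ?_⟩
  · -- limit of the side inequality
    have hcont : Tendsto (fun k => σ * (γs (φ k) * (us (φ k) 0)^2 - 1)) atTop
        (𝓝 (σ * (γh * (uh 0)^2 - 1))) := by
      apply Tendsto.const_mul
      apply Tendsto.sub_const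
      exact hγtend.mul ((((continuous_apply (0 : Fin (n+1))).tendsto _).comp hutend).pow 2)
    exact le_of_tendsto hcont (Filter.Eventually.of_forall fun k => hside (φ k))
  · -- the limit pair is optimal
    set qh := uh ⬝ᵥ (Bmat g H ts).mulVec uh with hqh
    -- b k := D ts + tk - γ * qf(tk, u k) tends to kR ts - γh * qh, and dominates s k
    have hqtend : Tendsto (fun k => (us (φ k)) ⬝ᵥ (Bmat g H (tk (φ k))).mulVec (us (φ k)))
        atTop (𝓝 qh) := by
      have hrw : ∀ k, (us (φ k)) ⬝ᵥ (Bmat g H (tk (φ k))).mulVec (us (φ k))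
          = (us (φ k)) ⬝ᵥ (Bmat g H 0).mulVec (us (φ k)) + (tk (φ k)) * (us (φ k) 0)^2 :=
        fun k => qform_affine g H (tk (φ k)) (us (φ k))
      simp only [hrw]
      rw [hqh, qform_affine g H ts uh]
      exact ((continuous_qf (Bmat g H 0)).tendsto _).comp hutend |>.add
        (httend.mul ((((continuous_apply (0 : Fin (n+1))).tendsto _).comp hutend).pow 2))
    have hbtend : Tendsto
        (fun k => Dfun ρ g H ts + tk (φ k)
          - γs (φ k) * ((us (φ k)) ⬝ᵥ (Bmat g H (tk (φ k))).mulVec (us (φ k))))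
        atTop (𝓝 (Dfun ρ g H ts + ts - γh * qh)) := by
      exact (httend.const_add _).sub (hγtend.mul hqtend)
    have hDts : Dfun ρ g H ts + ts = kR ρ g H ts := by unfold Dfun; ring
    -- s k := kR (tk k) - γs k * lambda(tk k) = ρ (γs k - 1) as a real
    have hsb : ∀ k, kR ρ g H (tk (φ k)) - γs (φ k) * lambdaMin (Bmat g H (tk (φ k)))
        ≤ Dfun ρ g H ts + tk (φ k)
          - γs (φ k) * ((us (φ k)) ⬝ᵥ (Bmat g H (tk (φ k))).mulVec (us (φ k))) := by
      intro k
      have h13 := hmax (tk (φ k))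
      rw [humin (φ k)]
      unfold Dfun at h13 ⊢
      linarith
    have hkey : ρ (γh - 1) ≤ ((kR ρ g H ts - γh * qh : ℝ) : EReal) := by
      by_contra hcon
      push_neg at hcon
      obtain ⟨c, hc1, hc2⟩ := EReal.exists_between_coe_real hcon
      have hγhtend : Tendsto (fun k => γs (φ k) - 1) atTop (𝓝 (γh - 1)) :=
        hγtend.sub_const 1
      have hev1 : ∀ᶠ k in atTop, (c : EReal) < ρ (γs (φ k) - 1) :=
        hγhtend.eventually (hρ.2.2.1 (γh - 1) c hc2)
      have hβc : Dfun ρ g H ts + ts - γh * qh < c := by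
        rw [hDts]
        exact_mod_cast hc1
      have hev2 : ∀ᶠ k in atTop,
          Dfun ρ g H ts + tk (φ k)
            - γs (φ k) * ((us (φ k)) ⬝ᵥ (Bmat g H (tk (φ k))).mulVec (us (φ k))) < c :=
        hbtend.eventually_lt_const hβc
      obtain ⟨k, hk1, hk2⟩ := (hev1.and hev2).exists
      rw [rho_fin_of_eq ρ g H hρ h1 h2 (heq (φ k)), EReal.coe_lt_coe_iff] at hk1
      have := hsb k
      linarith
    calc ρ (γh-1) + ((γh * qh : ℝ) : EReal)
        ≤ ((kR ρ g H ts - γh * qh : ℝ) : EReal) + ((γh * qh : ℝ) : EReal) :=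
          add_le_add_left hkey _
      _ = ((kR ρ g H ts : ℝ) : EReal) := by rw [← EReal.coe_add]; norm_num
      _ = khat ρ g H ts := (khat_eq_kR ρ g H hρ h1 h2 ts).symm

end Limit

section Final

variable {n : ℕ} (ρ : ℝ → EReal) (g : Fin n → ℝ) (H : Matrix (Fin n) (Fin n) ℝ)

theorem qf_smul {m : Type*} [Fintype m] (A : Matrix m m ℝ) (c : ℝ) (z : m → ℝ) :
    (c • z) ⬝ᵥ A.mulVec (c • z) = c^2 * (z ⬝ᵥ A.mulVec z) := by
  simp [smul_dotProduct, Matrix.mulVec_smul, dotProduct_smul, smul_eq_mul]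
  ring

theorem nsq_normalize {m : Type*} [Fintype m] {w : m → ℝ} (h : 0 < nsq w) :
    nsq ((Real.sqrt (nsq w))⁻¹ • w) = 1 := by
  rw [nsq_smul, ← Real.sqrt_inv, Real.sq_sqrt (inv_nonneg.mpr h.le)]
  exact inv_mul_cancel₀ h.ne'

theorem sq_le_nsq {m : Type*} [Fintype m] (u : m → ℝ) (i : m) : (u i)^2 ≤ nsq u := by
  rw [sq]
  exact Finset.single_le_sum (f := fun j => u j * u j)
    (fun j _ => mul_self_nonneg _) (Finset.mem_univ i)

theorem refined_pair (hρ : RhoBasic ρ) (h1 : Assump1 ρ) (h2 : Assump2 ρ)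
    {ts γ : ℝ} {u : Fin (n+1) → ℝ} (hγ : 0 ≤ γ) (hu : nsq u = 1)
    (hle : ρ (γ-1) + ((γ * (u ⬝ᵥ (Bmat g H ts).mulVec u) : ℝ) : EReal) ≤ khat ρ g H ts) :
    khat ρ g H ts = ρ (γ-1) + ((γ * lambdaMin (Bmat g H ts) : ℝ) : EReal) ∧
      (γ = 0 ∨ u ⬝ᵥ (Bmat g H ts).mulVec u = lambdaMin (Bmat g H ts)) := by
  have hray : lambdaMin (Bmat g H ts) ≤ u ⬝ᵥ (Bmat g H ts).mulVec u := by
    have := lambdaMin_le_qf (Bmat g H ts) u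
    rw [hu, mul_one] at this
    exact this
  have h2e : ρ (γ-1) + ((γ * lambdaMin (Bmat g H ts) : ℝ) : EReal)
      ≤ ρ (γ-1) + ((γ * (u ⬝ᵥ (Bmat g H ts).mulVec u) : ℝ) : EReal) :=
    add_le_add_right (EReal.coe_le_coe_iff.mpr (mul_le_mul_of_nonneg_left hray hγ)) _
  have heq : khat ρ g H ts = ρ (γ-1) + ((γ * lambdaMin (Bmat g H ts) : ℝ) : EReal) :=
    le_antisymm (khat_le ρ g H ts γ hγ) (h2e.trans hle)
  refine ⟨heq, ?_⟩
  have heq2 : ρ (γ-1) + ((γ * (u ⬝ᵥ (Bmat g H ts).mulVec u) : ℝ) : EReal)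
      = khat ρ g H ts := le_antisymm hle (heq ▸ h2e)
  rw [rho_fin_of_eq ρ g H hρ h1 h2 heq, ← EReal.coe_add,
    khat_eq_kR ρ g H hρ h1 h2 ts, EReal.coe_eq_coe_iff] at heq2
  rcases eq_or_ne γ 0 with h | h
  · exact Or.inl h
  · refine Or.inr (mul_left_cancel₀ h ?_)
    linarith

theorem ivt_pair (hρ : RhoBasic ρ) (h1 : Assump1 ρ) (h2 : Assump2 ρ) (hH : H.IsSymm)
    {ts γ₁ γ₂ : ℝ} {u₁ u₂ : Fin (n+1) → ℝ}
    (hγ₁ : 0 ≤ γ₁) (hγ₂ : 0 ≤ γ₂) (hu₁ : nsq u₁ = 1) (hu₂ : nsq u₂ = 1)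
    (hq₁ : u₁ ⬝ᵥ (Bmat g H ts).mulVec u₁ = lambdaMin (Bmat g H ts))
    (hq₂ : u₂ ⬝ᵥ (Bmat g H ts).mulVec u₂ = lambdaMin (Bmat g H ts))
    (hk₁ : khat ρ g H ts = ρ (γ₁-1) + ((γ₁ * lambdaMin (Bmat g H ts) : ℝ) : EReal))
    (hk₂ : khat ρ g H ts = ρ (γ₂-1) + ((γ₂ * lambdaMin (Bmat g H ts) : ℝ) : EReal))
    (hs₁ : γ₁ * (u₁ 0)^2 ≤ 1) (hs₂ : 1 ≤ γ₂ * (u₂ 0)^2) :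
    ∃ γ : ℝ, ∃ u : Fin (n+1) → ℝ, 0 ≤ γ ∧ nsq u = 1 ∧
      u ⬝ᵥ (Bmat g H ts).mulVec u = lambdaMin (Bmat g H ts) ∧
      khat ρ g H ts = ρ (γ-1) + ((γ * lambdaMin (Bmat g H ts) : ℝ) : EReal) ∧
      γ * (u 0)^2 = 1 := by
  set lam := lambdaMin (Bmat g H ts) with hlam
  -- WLOG the two eigenvectors have nonnegative inner product
  obtain ⟨u₂', hn2, hqf2, hsq2, hdnn⟩ : ∃ u₂' : Fin (n+1) → ℝ, nsq u₂' = 1 ∧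
      u₂' ⬝ᵥ (Bmat g H ts).mulVec u₂' = lam ∧ (u₂' 0)^2 = (u₂ 0)^2 ∧
      0 ≤ u₁ ⬝ᵥ u₂' := by
    rcases le_or_gt 0 (u₁ ⬝ᵥ u₂) with h | h
    · exact ⟨u₂, hu₂, hq₂, rfl, h⟩
    · refine ⟨-u₂, ?_, ?_, by rw [Pi.neg_apply]; ring, ?_⟩
      · show (-u₂) ⬝ᵥ (-u₂) = 1
        rw [neg_dotProduct, dotProduct_neg, neg_neg]
        exact hu₂
      · rw [show (-u₂ : Fin (n+1) → ℝ) = (-1 : ℝ) • u₂ by funext i; simp, qf_smul]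
        rw [hq₂]; ring
      · rw [dotProduct_neg]
        linarith
  -- eigenvectors
  have e₁ : (Bmat g H ts).mulVec u₁ = lam • u₁ :=
    eigen_of_rayleigh_min (Bmat g H ts) (Bmat_isSymm g H ts hH) hu₁ hq₁
  have e₂ : (Bmat g H ts).mulVec u₂' = lam • u₂' :=
    eigen_of_rayleigh_min (Bmat g H ts) (Bmat_isSymm g H ts hH) hn2 hqf2
  set w : ℝ → (Fin (n+1) → ℝ) := fun θ => (1-θ) • u₁ + θ • u₂' with hw
  have hBw : ∀ θ, (Bmat g H ts).mulVec (w θ) = lam • (w θ) := by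
    intro θ
    rw [hw]
    simp only [Matrix.mulVec_add, Matrix.mulVec_smul, e₁, e₂]
    rw [smul_add, smul_comm θ lam, smul_comm (1-θ) lam]
  have hnsqw : ∀ θ, nsq (w θ) = (1-θ)^2 + θ^2 + 2*θ*(1-θ)*(u₁ ⬝ᵥ u₂') := by
    intro θ
    rw [hw]
    show ((1-θ) • u₁ + θ • u₂') ⬝ᵥ ((1-θ) • u₁ + θ • u₂') = _
    simp only [dotProduct_add, add_dotProduct, dotProduct_smul,
      smul_dotProduct, smul_eq_mul]
    rw [dotProduct_comm u₂' u₁]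
    have h1' : u₁ ⬝ᵥ u₁ = 1 := hu₁
    have h2' : u₂' ⬝ᵥ u₂' = 1 := hn2
    rw [h1', h2']
    ring
  have hwpos : ∀ θ ∈ Set.Icc (0:ℝ) 1, (1/2 : ℝ) ≤ nsq (w θ) := by
    intro θ hθ
    rw [hnsqw]
    obtain ⟨h0, h1'⟩ := hθ
    nlinarith [mul_nonneg (mul_nonneg (by linarith : (0:ℝ) ≤ 2*θ) (by linarith : (0:ℝ) ≤ 1-θ)) hdnn,
      sq_nonneg (1 - 2*θ)]
  have hqw : ∀ θ, (w θ) ⬝ᵥ (Bmat g H ts).mulVec (w θ) = lam * nsq (w θ) := by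
    intro θ
    rw [hBw θ]
    show (w θ) ⬝ᵥ (lam • (w θ)) = _
    rw [dotProduct_smul, smul_eq_mul]
    rfl
  -- the continuous function for the IVT
  set f : ℝ → ℝ := fun θ => ((1-θ)*γ₁ + θ*γ₂) * (w θ 0)^2 / nsq (w θ) with hf
  have hwcont : Continuous fun θ => w θ := by
    apply continuous_pi
    intro i
    show Continuous fun θ => (1-θ) * u₁ i + θ * u₂' i
    exact ((continuous_const.sub continuous_id).mul continuous_const).add
      (continuous_id.mul continuous_const)
  have hnsqcont : Continuous fun θ => nsq (w θ) :=
    (continuous_dot _ _ continuous_id continuous_id).comp hwcont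
  have hfcont : ContinuousOn f (Set.Icc 0 1) := by
    apply ContinuousOn.div
    · apply Continuous.continuousOn
      apply Continuous.mul
      · exact ((continuous_const.sub continuous_id).mul continuous_const).add
          (continuous_id.mul continuous_const)
      · exact (((continuous_apply (0 : Fin (n+1))).comp hwcont).pow 2)
    · exact hnsqcont.continuousOn
    · intro θ hθ
      have := hwpos θ hθ
      linarith
  have hf0 : f 0 = γ₁ * (u₁ 0)^2 := by
    have hw0 : w 0 = u₁ := by rw [hw]; simp
    rw [hf]
    simp only [hw0, hu₁]
    norm_num
  have hf1 : f 1 = γ₂ * (u₂ 0)^2 := by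
    have hw1 : w 1 = u₂' := by rw [hw]; simp
    rw [hf]
    simp only [hw1, hn2, hsq2]
    norm_num
  have h1mem : (1:ℝ) ∈ Set.Icc (f 0) (f 1) := by
    rw [hf0, hf1]; exact ⟨hs₁, hs₂⟩
  obtain ⟨θ, hθmem, hθeq⟩ := intermediate_value_Icc (by norm_num : (0:ℝ) ≤ 1) hfcont h1mem
  -- assemble the final pair
  have hwθpos : 0 < nsq (w θ) := lt_of_lt_of_le (by norm_num) (hwpos θ hθmem)
  set c : ℝ := (Real.sqrt (nsq (w θ)))⁻¹ with hc
  have hc2 : c^2 = (nsq (w θ))⁻¹ := by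
    rw [hc, ← Real.sqrt_inv, Real.sq_sqrt (inv_nonneg.mpr hwθpos.le)]
  refine ⟨(1-θ)*γ₁ + θ*γ₂, c • w θ, ?_, nsq_normalize hwθpos, ?_, ?_, ?_⟩
  · obtain ⟨h0, h1'⟩ := hθmem
    have := mul_nonneg (by linarith : (0:ℝ) ≤ 1-θ) hγ₁
    have := mul_nonneg h0 hγ₂
    linarith
  · rw [qf_smul, hqw θ, hc2]
    field_simp
  · -- convexity of ρ gives optimality of the combined γ
    obtain ⟨h0, h1'⟩ := hθmem
    have hγc : 0 ≤ (1-θ)*γ₁ + θ*γ₂ := by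
      have := mul_nonneg (by linarith : (0:ℝ) ≤ 1-θ) hγ₁
      have := mul_nonneg h0 hγ₂
      linarith
    refine le_antisymm (khat_le ρ g H ts _ hγc) ?_
    have hconv := hρ.2.2.2 (γ₂ - 1) (γ₁ - 1) θ h0 h1'
    have harg : θ * (γ₂ - 1) + (1 - θ) * (γ₁ - 1) = ((1-θ)*γ₁ + θ*γ₂) - 1 := by ring
    rw [harg] at hconv
    rw [rho_fin_of_eq ρ g H hρ h1 h2 hk₁, rho_fin_of_eq ρ g H hρ h1 h2 hk₂,
      ← hlam] at hconv
    rw [show ((θ : ℝ) : EReal) * ((kR ρ g H ts - γ₂ * lam : ℝ) : EReal)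
        = ((θ * (kR ρ g H ts - γ₂ * lam) : ℝ) : EReal) from (EReal.coe_mul _ _).symm,
      show (((1 - θ : ℝ)) : EReal) * ((kR ρ g H ts - γ₁ * lam : ℝ) : EReal)
        = (((1-θ) * (kR ρ g H ts - γ₁ * lam) : ℝ) : EReal) from (EReal.coe_mul _ _).symm,
      ← EReal.coe_add] at hconv
    calc ρ ((1-θ)*γ₁ + θ*γ₂ - 1) + ((((1-θ)*γ₁ + θ*γ₂) * lam : ℝ) : EReal)
        ≤ ((θ * (kR ρ g H ts - γ₂ * lam) + (1-θ) * (kR ρ g H ts - γ₁ * lam) : ℝ) : EReal)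
          + ((((1-θ)*γ₁ + θ*γ₂) * lam : ℝ) : EReal) := add_le_add_left hconv _
      _ = ((kR ρ g H ts : ℝ) : EReal) := by
          rw [← EReal.coe_add, EReal.coe_eq_coe_iff]; ring
      _ = khat ρ g H ts := (khat_eq_kR ρ g H hρ h1 h2 ts).symm
  · show ((1-θ)*γ₁ + θ*γ₂) * (c * (w θ 0))^2 = 1
    have hnum : ((1-θ)*γ₁ + θ*γ₂) * (w θ 0)^2 = nsq (w θ) :=
      (div_eq_one_iff_eq hwθpos.ne').mp hθeq
    rw [mul_pow, hc2]
    have hrear : ((1-θ)*γ₁ + θ*γ₂) * ((nsq (w θ))⁻¹ * (w θ 0)^2)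
        = (((1-θ)*γ₁ + θ*γ₂) * (w θ 0)^2) * (nsq (w θ))⁻¹ := by ring
    rw [hrear, hnum, mul_inv_cancel₀ hwθpos.ne']

end Final


section Final2

variable {n : ℕ} (ρ : ℝ → EReal) (g : Fin n → ℝ) (H : Matrix (Fin n) (Fin n) ℝ)

theorem dual_value (hρ : RhoBasic ρ) (h1 : Assump1 ρ) (h2 : Assump2 ρ)
    {ts γ : ℝ} {u : Fin (n+1) → ℝ} (hγ : 0 ≤ γ) (hu : nsq u = 1)
    (hq : u ⬝ᵥ (Bmat g H ts).mulVec u = lambdaMin (Bmat g H ts))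
    (hk : khat ρ g H ts = ρ (γ-1) + ((γ * lambdaMin (Bmat g H ts) : ℝ) : EReal))
    (hone : γ * (u 0)^2 = 1) :
    ∃ x : Fin n → ℝ,
      khat ρ g H ts - (ts : EReal) = (quadObj g H x : EReal) + ρ (nsq x) := by
  set z : Fin (n+1) → ℝ := Real.sqrt γ • u with hz
  have hsq : Real.sqrt γ ^ 2 = γ := Real.sq_sqrt hγ
  have ha2 : (z 0)^2 = 1 := by
    rw [hz]
    show (Real.sqrt γ * u 0)^2 = 1
    rw [mul_pow, hsq]
    exact hone
  have hnsqz : nsq z = γ := by rw [hz, nsq_smul, hsq, hu, mul_one]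
  have hqz : z ⬝ᵥ (Bmat g H ts).mulVec z = γ * lambdaMin (Bmat g H ts) := by
    rw [hz, qf_smul, hsq, hq]
  set x : Fin n → ℝ := (z 0) • Fin.tail z with hx
  have htail : nsq (Fin.tail z) = γ - 1 := by
    have := nsq_cons (z 0) (Fin.tail z)
    rw [Fin.cons_self_tail z] at this
    rw [hnsqz, ha2] at this
    linarith
  have hnsqx : nsq x = γ - 1 := by rw [hx, nsq_smul, ha2, htail, one_mul]
  have hquad : quadObj g H x = 2 * (z 0) * (g ⬝ᵥ Fin.tail z)
      + (Fin.tail z) ⬝ᵥ H.mulVec (Fin.tail z) := by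
    rw [hx]
    unfold quadObj
    rw [dotProduct_smul, smul_eq_mul]
    have hsm : ((z 0) • Fin.tail z) ⬝ᵥ H.mulVec ((z 0) • Fin.tail z)
        = (z 0)^2 * ((Fin.tail z) ⬝ᵥ H.mulVec (Fin.tail z)) := qf_smul H (z 0) (Fin.tail z)
    rw [hsm, ha2]
    ring
  have hqz2 : γ * lambdaMin (Bmat g H ts) = ts + quadObj g H x := by
    rw [← hqz]
    have := qform_cons g H ts (z 0) (Fin.tail z)
    rw [Fin.cons_self_tail z] at this
    rw [this, hquad, ha2]
    ring
  refine ⟨x, ?_⟩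
  rw [hk, hnsqx, hqz2]
  rw [show ((ts + quadObj g H x : ℝ) : EReal)
      = ((quadObj g H x : ℝ) : EReal) + ((ts:ℝ) : EReal) by
    rw [add_comm (ts:ℝ), EReal.coe_add]]
  rw [← add_assoc, EReal.add_sub_cancel_right, add_comm]


theorem stmt2' (hH : H.IsSymm)
    (hρ : RhoBasic ρ) (h1 : Assump1 ρ) (h2 : Assump2 ρ) :
    (⨆ t : ℝ, (khat ρ g H t - (t : EReal))) =
        (⨅ x : Fin n → ℝ, ((quadObj g H x : EReal) + ρ (nsq x))) ∧
      ∃ ts : ℝ, ∀ t : ℝ, khat ρ g H t - (t : EReal) ≤ khat ρ g H ts - (ts : EReal) := by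
  obtain ⟨ts, hmax⟩ := D_max_exists ρ g H hρ h1 h2
  have hDle : ∀ t, khat ρ g H t - (t : EReal) ≤ khat ρ g H ts - (ts : EReal) := by
    intro t
    rw [khat_eq_kR ρ g H hρ h1 h2 t, khat_eq_kR ρ g H hρ h1 h2 ts,
      ← EReal.coe_sub, ← EReal.coe_sub, EReal.coe_le_coe_iff]
    exact hmax t
  constructor
  · apply le_antisymm
    · exact iSup_le fun t => le_iInf fun x => weak_duality ρ g H hρ h1 t x
    · -- strong duality via the optimal pair at ts
      obtain ⟨γ₁, u₁, hγ₁, hu₁, hside₁, hle₁⟩ :=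
        limit_pair ρ g H hρ h1 h2 hmax 1 one_ne_zero
      obtain ⟨γ₂, u₂, hγ₂, hu₂, hside₂, hle₂⟩ :=
        limit_pair ρ g H hρ h1 h2 hmax (-1) (by norm_num)
      obtain ⟨hk₁, hd₁⟩ := refined_pair ρ g H hρ h1 h2 hγ₁ hu₁ hle₁
      obtain ⟨hk₂, hd₂⟩ := refined_pair ρ g H hρ h1 h2 hγ₂ hu₂ hle₂
      have hs₁ : γ₁ * (u₁ 0)^2 ≤ 1 := by nlinarith [hside₁]
      have hs₂ : 1 ≤ γ₂ * (u₂ 0)^2 := by nlinarith [hside₂]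
      have hq₂ : u₂ ⬝ᵥ (Bmat g H ts).mulVec u₂ = lambdaMin (Bmat g H ts) := by
        rcases hd₂ with h | h
        · exfalso
          rw [h] at hs₂
          simp at hs₂
          linarith
        · exact h
      -- fix up the first pair in case γ₁ = 0
      obtain ⟨γ₁', u₁', hγ₁', hu₁', hq₁', hk₁', hs₁'⟩ :
          ∃ γ₁' : ℝ, ∃ u₁' : Fin (n+1) → ℝ, 0 ≤ γ₁' ∧ nsq u₁' = 1 ∧
            u₁' ⬝ᵥ (Bmat g H ts).mulVec u₁' = lambdaMin (Bmat g H ts) ∧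
            khat ρ g H ts = ρ (γ₁'-1) + ((γ₁' * lambdaMin (Bmat g H ts) : ℝ) : EReal) ∧
            γ₁' * (u₁' 0)^2 ≤ 1 := by
        rcases hd₁ with h | h
        · obtain ⟨u, hu, huq, -⟩ := exists_rayleigh_min (Bmat g H ts)
          refine ⟨γ₁, u, hγ₁, hu, huq, hk₁, ?_⟩
          rw [h]
          norm_num
        · exact ⟨γ₁, u₁, hγ₁, hu₁, h, hk₁, hs₁⟩
      obtain ⟨γ, u, hγ, hu, hq, hk, hone⟩ := ivt_pair ρ g H hρ h1 h2 hH
        hγ₁' hγ₂ hu₁' hu₂ hq₁' hq₂ hk₁' hk₂ hs₁' hs₂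
      obtain ⟨x, hxval⟩ := dual_value ρ g H hρ h1 h2 hγ hu hq hk hone
      calc (⨅ x : Fin n → ℝ, ((quadObj g H x : EReal) + ρ (nsq x)))
          ≤ (quadObj g H x : EReal) + ρ (nsq x) := iInf_le _ x
        _ = khat ρ g H ts - (ts : EReal) := hxval.symm
        _ ≤ ⨆ t : ℝ, (khat ρ g H t - (t : EReal)) :=
            le_iSup (fun t => khat ρ g H t - (t : EReal)) ts
  · exact ⟨ts, hDle⟩

end Final2

theorem stmt2 {n : ℕ} (g : Fin n → ℝ) (hg : g ≠ 0)
    (H : Matrix (Fin n) (Fin n) ℝ) (hH : H.IsSymm)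
    (ρ : ℝ → EReal) (hρ : RhoBasic ρ) (h1 : Assump1 ρ) (h2 : Assump2 ρ) :
    (⨆ t : ℝ, (khat ρ g H t - (t : EReal))) =
        (⨅ x : Fin n → ℝ, ((quadObj g H x : EReal) + ρ (nsq x))) ∧
      ∃ ts : ℝ, ∀ t : ℝ, khat ρ g H t - (t : EReal) ≤ khat ρ g H ts - (ts : EReal) := stmt2' ρ g H hH hρ h1 h2

end
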